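/- arXiv:2109.14486 — 7 statements merged into one kernel-verified Lean document; each statement's English description precedes it below -/
import Mathlib

section
/- Let k > 0 and t₀ ∈ ℝ. Suppose φ : [t₀, ∞) → ℝ is differentiable with φ'(t) = −k·sin(φ(t)) for all t ≥ t₀ and φ(t₀) ∈ (−π, π). Then φ(t) → 0 as t → ∞. -/
/-!
The equation `φ' = -k sin φ` is solved by separation of variables: `tan (φ / 2)` satisfies
`(tan (φ / 2))' = -k tan (φ / 2)`, so `φ t = 2 arctan (tan (φ t₀ / 2) e^{-k (t - t₀)})` as long as
`φ t₀ ∈ (-π, π)`. The right-hand side is globally Lipschitz, so by uniqueness every solution is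
this closed form, which tends to `0` when `k > 0`.
-/

open Real Filter Set Topology

theorem Real.sin_two_mul_arctan (x : ℝ) : sin (2 * arctan x) = 2 * x / (1 + x ^ 2) := by
  have hsq : √(1 + x ^ 2) * √(1 + x ^ 2) = 1 + x ^ 2 := Real.mul_self_sqrt (by positivity)
  rw [sin_two_mul, sin_arctan, cos_arctan, mul_one_div, ← mul_div_assoc, div_div, hsq]

noncomputable def sinFlow (k t₀ θ t : ℝ) : ℝ :=
  2 * arctan (tan (θ / 2) * exp (-k * (t - t₀)))

theorem hasDerivAt_sinFlow (k t₀ θ t : ℝ) :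
    HasDerivAt (sinFlow k t₀ θ) (-k * sin (sinFlow k t₀ θ t)) t := by
  set x := tan (θ / 2) * exp (-k * (t - t₀))
  have hexp : HasDerivAt (fun s => tan (θ / 2) * exp (-k * (s - t₀))) (x * -k) t := by
    have := (((hasDerivAt_id t).sub_const t₀).const_mul (-k)).exp.const_mul (tan (θ / 2))
    simpa [x, mul_assoc] using this
  refine (((hasDerivAt_arctan x).comp t hexp).const_mul 2).congr_deriv ?_
  rw [show sinFlow k t₀ θ t = 2 * arctan x from rfl, sin_two_mul_arctan]
  field_simp

theorem sinFlow_self {θ : ℝ} (hθ : θ ∈ Ioo (-π) π) (k t₀ : ℝ) : sinFlow k t₀ θ t₀ = θ := by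
  have harctan : arctan (tan (θ / 2)) = θ / 2 := arctan_tan (by linarith [hθ.1]) (by linarith [hθ.2])
  simp only [sinFlow, sub_self, mul_zero, exp_zero, mul_one, harctan]
  ring

theorem tendsto_sinFlow {k : ℝ} (hk : 0 < k) (t₀ θ : ℝ) :
    Tendsto (sinFlow k t₀ θ) atTop (𝓝 0) := by
  have hlin : Tendsto (fun t => -k * (t - t₀)) atTop atBot :=
    (tendsto_atTop_add_const_right _ (-t₀) tendsto_id).const_mul_atTop_of_neg (neg_neg_of_pos hk)
  have hlim := ((continuous_arctan.tendsto 0).comp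
    (by simpa using (tendsto_exp_atBot.comp hlin).const_mul (tan (θ / 2)))).const_mul 2
  unfold sinFlow
  simpa [Function.comp_def] using hlim

theorem lipschitzWith_neg_mul_sin (k : ℝ) : LipschitzWith ‖-k‖₊ (fun x => -k * sin x) :=
  mul_one ‖-k‖₊ ▸ (lipschitzWith_smul (-k)).comp lipschitzWith_sin

/-- Heading-error dynamics `φ' = -k sin φ`: the origin is almost globally
asymptotically stable; any solution starting in `(-π, π)` converges to `0`. -/
theorem heading_error_converges
    (k t₀ : ℝ) (hk : 0 < k) (φ : ℝ → ℝ)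
    (hderiv : ∀ t, t₀ ≤ t → HasDerivAt φ (-k * Real.sin (φ t)) t)
    (hinit : φ t₀ ∈ Set.Ioo (-Real.pi) Real.pi) :
    Tendsto φ atTop (nhds 0) := by
  have hφ : ∀ t, t₀ ≤ t → φ t = sinFlow k t₀ (φ t₀) t := fun t ht =>
    ODE_solution_unique (v := fun _ x => -k * sin x) (fun _ => lipschitzWith_neg_mul_sin k)
      (fun s hs => (hderiv s hs.1).continuousAt.continuousWithinAt)
      (fun s hs => (hderiv s hs.1).hasDerivWithinAt)
      (fun s _ => (hasDerivAt_sinFlow k t₀ _ s).continuousAt.continuousWithinAt)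
      (fun s _ => (hasDerivAt_sinFlow k t₀ _ s).hasDerivWithinAt)
      (sinFlow_self hinit k t₀).symm ⟨ht, le_rfl⟩
  refine (tendsto_sinFlow hk t₀ (φ t₀)).congr' ?_
  filter_upwards [eventually_ge_atTop t₀] with t ht using (hφ t ht).symm
end

section
/- Let k > 0 and t₀ ∈ ℝ. Suppose e, φ : [t₀, ∞) → ℝ are differentiable with e'(t) = −k·e(t)·cos²(φ(t)) and φ'(t) = −k·sin(φ(t)) for all t ≥ t₀, and φ(t₀) ∈ (−π, π]. Then there exist M ≥ 0 and μ > 0 such that |e(t)| ≤ M·exp(−μ·(t − t₀)) for all t ≥ t₀; in particular e(t) → 0 exponentially. -/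
open Real

/-!
Along trajectories, `V = e² (2 - cos φ)` satisfies `V' = -k e² (2 cos²φ (2 - cos φ) + sin²φ)`,
and `2 c² (2 - c) + (1 - c²) ≥ (2 - c) / 4` for `|c| ≤ 1`, so `V' ≤ -(k/4) V`. Grönwall then
gives `e² ≤ V ≤ 3 e(t₀)² exp(-(k/4)(t - t₀))`.
-/

theorem le_mul_exp_of_hasDerivAt_le_mul {f f' : ℝ → ℝ} {K a : ℝ}
    (hf : ∀ x, a ≤ x → HasDerivAt f (f' x) x) (bound : ∀ x, a ≤ x → f' x ≤ K * f x)
    {x : ℝ} (hx : a ≤ x) : f x ≤ f a * exp (K * (x - a)) := by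
  rw [← gronwallBound_ε0]
  refine le_gronwallBound_of_liminf_deriv_right_le (f' := f') ?_ ?_ le_rfl ?_ x ⟨hx, le_rfl⟩
  · exact fun y hy => (hf y hy.1).continuousAt.continuousWithinAt
  · exact fun y hy _ hr => (hf y hy.1).hasDerivWithinAt.liminf_right_slope_le hr
  · simpa only [add_zero] using fun y hy => bound y hy.1

noncomputable def distanceLyapunov (e φ : ℝ) : ℝ := e ^ 2 * (2 - cos φ)

theorem sq_le_distanceLyapunov (e φ : ℝ) : e ^ 2 ≤ distanceLyapunov e φ := by
  unfold distanceLyapunov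
  nlinarith [cos_le_one φ, sq_nonneg e]

theorem distanceLyapunov_le (e φ : ℝ) : distanceLyapunov e φ ≤ 3 * e ^ 2 := by
  unfold distanceLyapunov
  nlinarith [neg_one_le_cos φ, sq_nonneg e]

theorem two_sub_le_cos_sq_mul_two_sub_add_sin_sq (φ : ℝ) :
    (2 - cos φ) / 4 ≤ 2 * cos φ ^ 2 * (2 - cos φ) + sin φ ^ 2 := by
  have hcube : cos φ ^ 3 ≤ cos φ ^ 2 := by nlinarith [cos_le_one φ, sq_nonneg (cos φ)]
  nlinarith [sin_sq_add_cos_sq φ, sq_nonneg (cos φ + 1 / 8)]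

theorem hasDerivAt_distanceLyapunov {k : ℝ} {e φ : ℝ → ℝ} {t : ℝ}
    (he : HasDerivAt e (-k * e t * cos (φ t) ^ 2) t)
    (hφ : HasDerivAt φ (-k * sin (φ t)) t) :
    HasDerivAt (fun s => distanceLyapunov (e s) (φ s))
      (-k * e t ^ 2 * (2 * cos (φ t) ^ 2 * (2 - cos (φ t)) + sin (φ t) ^ 2)) t := by
  have hcos := ((hasDerivAt_cos (φ t)).comp t hφ).const_sub 2
  refine ((he.pow 2).mul hcos).congr_deriv ?_
  simp only [Function.comp_apply, Pi.pow_apply, Nat.cast_ofNat]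
  ring

theorem distanceLyapunov_deriv_le {k : ℝ} (hk : 0 ≤ k) (e φ : ℝ) :
    -k * e ^ 2 * (2 * cos φ ^ 2 * (2 - cos φ) + sin φ ^ 2) ≤ -(k / 4) * distanceLyapunov e φ := by
  have := mul_le_mul_of_nonneg_left (two_sub_le_cos_sq_mul_two_sub_add_sin_sq φ)
    (mul_nonneg hk (sq_nonneg e))
  unfold distanceLyapunov
  linarith

theorem distance_error_exponentially_stable_general
    (k t₀ : ℝ) (hk : 0 < k) (e φ : ℝ → ℝ)
    (he : ∀ t, t₀ ≤ t → HasDerivAt e (-k * e t * (Real.cos (φ t))^2) t)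
    (hφ : ∀ t, t₀ ≤ t → HasDerivAt φ (-k * Real.sin (φ t)) t) :
    ∃ M : ℝ, 0 ≤ M ∧ ∃ μ : ℝ, 0 < μ ∧
      ∀ t, t₀ ≤ t → |e t| ≤ M * Real.exp (-μ * (t - t₀)) := by
  refine ⟨2 * |e t₀|, by positivity, k / 8, by positivity, fun t ht => ?_⟩
  have hdecay : e t ^ 2 ≤ 3 * e t₀ ^ 2 * exp (-(k / 4) * (t - t₀)) :=
    calc e t ^ 2 ≤ distanceLyapunov (e t) (φ t) := sq_le_distanceLyapunov _ _
      _ ≤ distanceLyapunov (e t₀) (φ t₀) * exp (-(k / 4) * (t - t₀)) :=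
        le_mul_exp_of_hasDerivAt_le_mul
          (fun s hs => hasDerivAt_distanceLyapunov (he s hs) (hφ s hs))
          (fun s _ => distanceLyapunov_deriv_le hk.le _ _) ht
      _ ≤ 3 * e t₀ ^ 2 * exp (-(k / 4) * (t - t₀)) := by
        gcongr
        exact distanceLyapunov_le _ _
  have hexp : exp (-(k / 8) * (t - t₀)) ^ 2 = exp (-(k / 4) * (t - t₀)) := by
    rw [← exp_nat_mul]
    ring_nf
  refine abs_le_of_sq_le_sq ?_ (by positivity)
  rw [mul_pow, mul_pow, sq_abs, hexp]
  linarith [mul_nonneg (sq_nonneg (e t₀)) (exp_pos (-(k / 4) * (t - t₀))).le]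

/-- Global exponential stability of the distance error `e = 0` for the
closed-loop unicycle error dynamics `e' = -k e cos²(φ)`, `φ' = -k sin φ`
with initial heading error in `(-π, π]`. -/
theorem distance_error_exponentially_stable
    (k t₀ : ℝ) (hk : 0 < k) (e φ : ℝ → ℝ)
    (he : ∀ t, t₀ ≤ t → HasDerivAt e (-k * e t * (Real.cos (φ t))^2) t)
    (hφ : ∀ t, t₀ ≤ t → HasDerivAt φ (-k * Real.sin (φ t)) t)
    (hinit : φ t₀ ∈ Set.Ioc (-Real.pi) Real.pi) :
    ∃ M : ℝ, 0 ≤ M ∧ ∃ μ : ℝ, 0 < μ ∧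
      ∀ t, t₀ ≤ t → |e t| ≤ M * Real.exp (-μ * (t - t₀)) :=
  distance_error_exponentially_stable_general k t₀ hk e φ he hφ
end

section
/- Let u = (u₁, u₂) ∈ ℝ², let I ⊆ ℝ be an open interval, and let x, y, θ : I → ℝ be differentiable and v : I → ℝ be such that x'(t) = v(t)·cos(θ(t)) and y'(t) = v(t)·sin(θ(t)) for all t ∈ I, with (x(t), y(t)) ≠ u for all t ∈ I. Define e(t) = √((u₁ − x(t))² + (u₂ − y(t))²) and φ(t) = arg((u₁ − x(t)) + i·(u₂ − y(t))) − θ(t), where arg is the principal argument of a nonzero complex number. Then e is differentiable on I and e'(t) = −v(t)·cos(φ(t)) for all t ∈ I. -/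
/-!
Differentiating `e = √((u₁ - x)² + (u₂ - y)²)` gives
`e' = -v ((u₁ - x) cos θ + (u₂ - y) sin θ) / e`. Writing `z = (u₁ - x) + i (u₂ - y)` in polar form,
`z = e (cos (arg z) + i sin (arg z))`, the numerator is `e cos (arg z - θ)`, so `e' = -v cos φ`.
-/

lemma Complex.norm_mul_cos_arg_sub (z : ℂ) (θ : ℝ) :
    ‖z‖ * Real.cos (Complex.arg z - θ) = z.re * Real.cos θ + z.im * Real.sin θ := by
  rw [Real.cos_sub, mul_add, ← mul_assoc, ← mul_assoc, Complex.norm_mul_cos_arg,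
    Complex.norm_mul_sin_arg]

lemma HasDerivAt.sqrt_sq_add_sq {f g : ℝ → ℝ} {f' g' t : ℝ}
    (hf : HasDerivAt f f' t) (hg : HasDerivAt g g' t) (hfg : (f t, g t) ≠ 0) :
    HasDerivAt (fun s => √(f s ^ 2 + g s ^ 2))
      ((f t * f' + g t * g') / √(f t ^ 2 + g t ^ 2)) t := by
  have hpos : 0 < f t ^ 2 + g t ^ 2 := by
    obtain hf0 | hg0 : f t ≠ 0 ∨ g t ≠ 0 := by simp only [ne_eq, Prod.ext_iff] at hfg; tauto
    all_goals positivity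
  convert ((hf.fun_pow 2).fun_add (hg.fun_pow 2)).sqrt hpos.ne' using 1
  field_simp
  ring

theorem distance_error_dynamics_general
    (u₁ u₂ : ℝ) (α β : ℝ) (x y θ v : ℝ → ℝ)
    (hx : ∀ t ∈ Set.Ioo α β, HasDerivAt x (v t * Real.cos (θ t)) t)
    (hy : ∀ t ∈ Set.Ioo α β, HasDerivAt y (v t * Real.sin (θ t)) t)
    (hne : ∀ t ∈ Set.Ioo α β, (x t, y t) ≠ (u₁, u₂)) :
    ∀ t ∈ Set.Ioo α β,
      HasDerivAt (fun s => Real.sqrt ((u₁ - x s)^2 + (u₂ - y s)^2))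
        (-(v t) * Real.cos
          (Complex.arg (Complex.mk (u₁ - x t) (u₂ - y t)) - θ t)) t := by
  intro t ht
  set z : ℂ := ⟨u₁ - x t, u₂ - y t⟩
  have hz : (z.re, z.im) ≠ 0 := by
    simpa [z, Prod.ext_iff, sub_eq_zero, eq_comm] using hne t ht
  have hnorm : ‖z‖ = √(z.re ^ 2 + z.im ^ 2) := Complex.norm_eq_sqrt_sq_add_sq z
  have hz0 : ‖z‖ ≠ 0 := norm_ne_zero_iff.mpr fun h => hz (by simp [h])
  convert ((hx t ht).const_sub u₁).sqrt_sq_add_sq ((hy t ht).const_sub u₂) hz using 1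
  rw [← hnorm, eq_div_iff hz0, mul_assoc, mul_comm _ ‖z‖, Complex.norm_mul_cos_arg_sub]
  ring

/-- For a unicycle `x' = v cos θ`, `y' = v sin θ` tracking a fixed reference
`u = (u₁, u₂)`, the distance error `e = √((u₁-x)² + (u₂-y)²)` is differentiable
with `e' = -v cos φ`, where `φ = arg((u₁-x) + i(u₂-y)) - θ` is the heading error. -/
theorem distance_error_dynamics
    (u₁ u₂ : ℝ) (α β : ℝ) (x y θ v : ℝ → ℝ)
    (hx : ∀ t ∈ Set.Ioo α β, HasDerivAt x (v t * Real.cos (θ t)) t)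
    (hy : ∀ t ∈ Set.Ioo α β, HasDerivAt y (v t * Real.sin (θ t)) t)
    (hθ : ∀ t ∈ Set.Ioo α β, DifferentiableAt ℝ θ t)
    (hne : ∀ t ∈ Set.Ioo α β, (x t, y t) ≠ (u₁, u₂)) :
    ∀ t ∈ Set.Ioo α β,
      HasDerivAt (fun s => Real.sqrt ((u₁ - x s)^2 + (u₂ - y s)^2))
        (-(v t) * Real.cos
          (Complex.arg (Complex.mk (u₁ - x t) (u₂ - y t)) - θ t)) t :=
  distance_error_dynamics_general u₁ u₂ α β x y θ v hx hy hne
end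

section
/- Let ℓ, μ, γ > 0, set δ = ℓ/(μ + ℓ), and let 0 < ε < √(γ/(μ·ℓ)). Then the symmetric 2×2 real matrix Λ = [[−(1 − δ), (ε/2)(ℓ(1 − δ) + μδ)], [(ε/2)(ℓ(1 − δ) + μδ), −γδ]] is negative definite. -/
/-!
A symmetric `2 × 2` matrix `!![-a, b; b, -c]` with `a > 0` is negative definite as soon as
`b² < a c`, by completing the square in its quadratic form. For `Λ` we have
`a = 1 - δ = μ/(μ+ℓ)`, `b = εμℓ/(μ+ℓ)` and `c = γδ`, so `b²` and `a c` share the factor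
`μℓ/(μ+ℓ)²` and the comparison reduces to `ε²μℓ < γ`, which is the gain bound `ε < √(γ/(μℓ))`.
-/

open Matrix

theorem neg_quadratic_lt_zero {K : Type*} [CommRing K] [LinearOrder K] [IsStrictOrderedRing K]
    {a b c x y : K} (ha : 0 < a) (hdisc : b ^ 2 < a * c) (hxy : x ≠ 0 ∨ y ≠ 0) :
    -a * x ^ 2 + 2 * b * x * y - c * y ^ 2 < 0 := by
  have hsq : a * (-a * x ^ 2 + 2 * b * x * y - c * y ^ 2)
      = -(a * x - b * y) ^ 2 - (a * c - b ^ 2) * y ^ 2 := by ring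
  suffices a * (-a * x ^ 2 + 2 * b * x * y - c * y ^ 2) < 0 from neg_of_mul_neg_right this ha.le
  rw [hsq]
  by_cases hy : y = 0
  · have hx : x ≠ 0 := hxy.resolve_right (not_not.mpr hy)
    subst hy
    have : 0 < (a * x) ^ 2 := by positivity
    linarith
  · have : 0 < (a * c - b ^ 2) * y ^ 2 := mul_pos (sub_pos.mpr hdisc) (by positivity)
    nlinarith [sq_nonneg (a * x - b * y)]

theorem Matrix.isSymm_of_fin_two {α : Type*} (a b d : α) : (!![a, b; b, d]).IsSymm :=
  IsSymm.ext fun i j => by fin_cases i <;> fin_cases j <;> rfl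

theorem Matrix.dotProduct_mulVec_of_fin_two {R : Type*} [CommRing R] (a b c d : R) (x : Fin 2 → R) :
    x ⬝ᵥ !![a, b; c, d] *ᵥ x = a * x 0 ^ 2 + (b + c) * x 0 * x 1 + d * x 1 ^ 2 := by
  simp only [dotProduct, mulVec, Fin.sum_univ_two, of_apply, cons_val', cons_val_zero,
    cons_val_one, empty_val', cons_val_fin_one]
  ring

theorem Matrix.dotProduct_mulVec_neg_of_fin_two {K : Type*} [CommRing K] [LinearOrder K]
    [IsStrictOrderedRing K] {a b c : K} (ha : 0 < a) (hdisc : b ^ 2 < a * c)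
    {x : Fin 2 → K} (hx : x ≠ 0) : x ⬝ᵥ !![-a, b; b, -c] *ᵥ x < 0 := by
  have hx' : x 0 ≠ 0 ∨ x 1 ≠ 0 := by
    by_contra! h
    exact hx (funext fun i => by fin_cases i <;> simp [h.1, h.2])
  rw [dotProduct_mulVec_of_fin_two]
  linarith [neg_quadratic_lt_zero ha hdisc hx']

theorem lasalle_coupling_sq_lt_det {ℓ μ γ ε : ℝ} (hℓ : 0 < ℓ) (hμ : 0 < μ) (hε0 : 0 < ε)
    (hε : ε < Real.sqrt (γ / (μ * ℓ))) :
    ((ε / 2) * (ℓ * (1 - ℓ / (μ + ℓ)) + μ * (ℓ / (μ + ℓ)))) ^ 2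
      < (1 - ℓ / (μ + ℓ)) * (γ * (ℓ / (μ + ℓ))) := by
  have hμℓ : 0 < μ * ℓ := mul_pos hμ hℓ
  have hgain : ε ^ 2 * (μ * ℓ) < γ :=
    (lt_div_iff₀ hμℓ).mp ((Real.lt_sqrt hε0.le).mp hε)
  have hs : μ + ℓ ≠ 0 := by positivity
  have hlhs : ((ε / 2) * (ℓ * (1 - ℓ / (μ + ℓ)) + μ * (ℓ / (μ + ℓ)))) ^ 2
      = ε ^ 2 * (μ * ℓ) * (μ * ℓ / (μ + ℓ) ^ 2) := by field_simp; ring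
  have hrhs : (1 - ℓ / (μ + ℓ)) * (γ * (ℓ / (μ + ℓ))) = γ * (μ * ℓ / (μ + ℓ) ^ 2) := by
    field_simp; ring
  rw [hlhs, hrhs]
  exact mul_lt_mul_of_pos_right hgain (by positivity)

theorem lasalle_matrix_neg_def_general
    (ℓ μ γ ε : ℝ) (hℓ : 0 < ℓ) (hμ : 0 < μ)
    (hε0 : 0 < ε) (hε : ε < Real.sqrt (γ / (μ * ℓ))) :
    letI δ : ℝ := ℓ / (μ + ℓ)
    letI Λ : Matrix (Fin 2) (Fin 2) ℝ :=
      !![-(1 - δ), (ε / 2) * (ℓ * (1 - δ) + μ * δ);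
         (ε / 2) * (ℓ * (1 - δ) + μ * δ), -(γ * δ)]
    Λ.IsSymm ∧ ∀ x : Fin 2 → ℝ, x ≠ 0 → x ⬝ᵥ Λ.mulVec x < 0 := by
  have hδ : 0 < 1 - ℓ / (μ + ℓ) := by
    rw [sub_pos, div_lt_one (by positivity)]
    linarith
  exact ⟨isSymm_of_fin_two _ _ _, fun x hx =>
    dotProduct_mulVec_neg_of_fin_two hδ (lasalle_coupling_sq_lt_det hℓ hμ hε0 hε) hx⟩

/-- Negative definiteness of the 2×2 matrix `Λ` appearing in the LaSalle
argument, for `δ = ℓ/(μ + ℓ)` and gain `0 < ε < √(γ/(μℓ))`. -/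
theorem lasalle_matrix_neg_def
    (ℓ μ γ ε : ℝ) (hℓ : 0 < ℓ) (hμ : 0 < μ) (hγ : 0 < γ)
    (hε0 : 0 < ε) (hε : ε < Real.sqrt (γ / (μ * ℓ))) :
    letI δ : ℝ := ℓ / (μ + ℓ)
    letI Λ : Matrix (Fin 2) (Fin 2) ℝ :=
      !![-(1 - δ), (ε / 2) * (ℓ * (1 - δ) + μ * δ);
         (ε / 2) * (ℓ * (1 - δ) + μ * δ), -(γ * δ)]
    Λ.IsSymm ∧ ∀ x : Fin 2 → ℝ, x ≠ 0 → x ⬝ᵥ Λ.mulVec x < 0 :=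
  lasalle_matrix_neg_def_general ℓ μ γ ε hℓ hμ hε0 hε
end

section
/- Let N ≥ 1, let E ⊆ Fin N × Fin N be a finite set of ordered pairs representing an orientation of the edges of a finite simple graph G on vertices {1,…,N} (each edge of G appears in E exactly once, in one orientation, and (i,j) ∈ E implies i ≠ j). Given desired displacements d : E → ℝ², a target b ∈ ℝ², and weights a, c > 0, define the cost Φ : (ℝ²)^N → ℝ by Φ(r) = (a/2)·Σ_{(i,j)∈E} ‖r_i − r_j − d(i,j)‖² + (c/2)·Σ_{i=1}^N ‖r_i − b‖², where ‖·‖ is the Euclidean norm. Then the unique global minimizer r̄ of Φ satisfies (1/N)·Σ_{i=1}^N r̄_i = b, i.e., the centroid of the optimal configuration is exactly the target location. -/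
open Finset

section SumOfSquares

variable {ι E : Type*} [NormedAddCommGroup E] [InnerProductSpace ℝ E]

theorem Finset.sum_norm_add_sq (s : Finset ι) (x : ι → E) (v : E) :
    ∑ i ∈ s, ‖x i + v‖ ^ 2
      = ∑ i ∈ s, ‖x i‖ ^ 2 + 2 * inner ℝ (∑ i ∈ s, x i) v + #s * ‖v‖ ^ 2 := by
  simp only [norm_add_sq_real, sum_add_distrib, sum_inner, ← mul_sum, sum_const, nsmul_eq_mul]

/-- Shifting all points by the negative of their centroid changes the sum of squared norms by
`-‖∑ x‖² / #s`, so a sum that no common shift can decrease must vanish. -/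
theorem Finset.sum_eq_zero_of_forall_sum_norm_sq_le (s : Finset ι) (x : ι → E)
    (h : ∀ v, ∑ i ∈ s, ‖x i‖ ^ 2 ≤ ∑ i ∈ s, ‖x i + v‖ ^ 2) :
    ∑ i ∈ s, x i = 0 := by
  rcases s.eq_empty_or_nonempty with rfl | hs
  · exact sum_empty
  set S := ∑ i ∈ s, x i
  have hcard : (0 : ℝ) < #s := by exact_mod_cast hs.card_pos
  have hshift := h (-(#s : ℝ)⁻¹ • S)
  rw [sum_norm_add_sq, inner_smul_right, real_inner_self_eq_norm_sq, norm_smul, norm_neg,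
    Real.norm_of_nonneg (inv_nonneg.2 hcard.le)] at hshift
  have hS : ‖S‖ ^ 2 ≤ 0 := by
    have : (#s : ℝ) * ((#s : ℝ)⁻¹ * ‖S‖) ^ 2 = (#s : ℝ)⁻¹ * ‖S‖ ^ 2 := by
      field_simp
    nlinarith [inv_pos.2 hcard]
  exact norm_eq_zero.1 (pow_eq_zero_iff two_ne_zero |>.1 (le_antisymm hS (sq_nonneg _)))

end SumOfSquares

theorem formation_cost_minimizer_centroid_general
    (N : ℕ) (hN : 1 ≤ N)
    (E : Finset (Fin N × Fin N))
    (d : Fin N × Fin N → EuclideanSpace ℝ (Fin 2))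
    (b : EuclideanSpace ℝ (Fin 2)) (a c : ℝ) (hc : 0 < c)
    (Φ : PiLp 2 (fun _ : Fin N => EuclideanSpace ℝ (Fin 2)) → ℝ)
    (hΦ : ∀ r, Φ r = (a / 2) * ∑ e ∈ E, ‖r e.1 - r e.2 - d e‖^2
      + (c / 2) * ∑ i : Fin N, ‖r i - b‖^2)
    (rbar : PiLp 2 (fun _ : Fin N => EuclideanSpace ℝ (Fin 2)))
    (hmin : ∀ r, Φ rbar ≤ Φ r) :
    ((N : ℝ))⁻¹ • (∑ i : Fin N, rbar i) = b := by
  -- A common translation of all agents leaves the formation term unchanged.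
  have htarget : ∀ v, ∑ i, ‖rbar i - b‖ ^ 2 ≤ ∑ i, ‖(rbar i - b) + v‖ ^ 2 := by
    intro v
    have h := hmin (WithLp.toLp 2 fun i => rbar i + v)
    simp only [hΦ, add_sub_add_right_eq_sub] at h
    simpa only [sub_add_eq_add_sub] using le_of_mul_le_mul_left (by linarith) (half_pos hc)
  have hsum : ∑ i, rbar i = (N : ℝ) • b := by
    have := sum_eq_zero_of_forall_sum_norm_sq_le _ _ htarget
    rwa [sum_sub_distrib, sub_eq_zero, sum_const, card_univ, Fintype.card_fin,
      ← Nat.cast_smul_eq_nsmul ℝ] at this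
  rw [hsum, inv_smul_smul₀ (Nat.cast_ne_zero.2 (by omega))]

/-- The centroid of the unique global minimizer of the formation-plus-target
cost is exactly the target location `b`. -/
theorem formation_cost_minimizer_centroid
    (N : ℕ) (hN : 1 ≤ N) (G : SimpleGraph (Fin N)) [DecidableRel G.Adj]
    (E : Finset (Fin N × Fin N))
    (hEadj : ∀ i j : Fin N, G.Adj i j ↔ ((i, j) ∈ E ∨ (j, i) ∈ E))
    (hEonce : ∀ i j : Fin N, (i, j) ∈ E → (j, i) ∉ E)
    (hEne : ∀ i j : Fin N, (i, j) ∈ E → i ≠ j)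
    (d : Fin N × Fin N → EuclideanSpace ℝ (Fin 2))
    (b : EuclideanSpace ℝ (Fin 2)) (a c : ℝ) (ha : 0 < a) (hc : 0 < c)
    (Φ : PiLp 2 (fun _ : Fin N => EuclideanSpace ℝ (Fin 2)) → ℝ)
    (hΦ : ∀ r, Φ r = (a / 2) * ∑ e ∈ E, ‖r e.1 - r e.2 - d e‖^2
      + (c / 2) * ∑ i : Fin N, ‖r i - b‖^2)
    (rbar : PiLp 2 (fun _ : Fin N => EuclideanSpace ℝ (Fin 2)))
    (hmin : ∀ r, Φ rbar ≤ Φ r) :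
    ((N : ℝ))⁻¹ • (∑ i : Fin N, rbar i) = b :=
  formation_cost_minimizer_centroid_general N hN E d b a c hc Φ hΦ rbar hmin
end

section
/- Let G be a connected finite simple graph on N ≥ 1 vertices, let E ⊆ Fin N × Fin N be an orientation of its edges (each edge appears exactly once as an ordered pair), let r* ∈ (ℝ²)^N, define d : E → ℝ² by d(i,j) = r*_i − r*_j, and let b ∈ ℝ² and c > 0 be fixed. For each a > 0 let r̄(a) be the unique global minimizer of Φ_a(r) = (a/2)·Σ_{(i,j)∈E} ‖r_i − r_j − d(i,j)‖² + (c/2)·Σ_{i=1}^N ‖r_i − b‖². Then for every (i,j) ∈ E, lim_{a→∞} (r̄(a)_i − r̄(a)_j) = d(i,j). -/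
open Finset Filter

/-- In the regime where the formation weight dominates, the minimizer of the
formation-plus-target cost attains the target inter-agent displacements in the
limit: for every oriented edge `(i,j)`, `r̄(a)_i - r̄(a)_j → d(i,j)` as `a → ∞`. -/
theorem formation_displacements_limit
    (N : ℕ) (hN : 1 ≤ N) (G : SimpleGraph (Fin N)) [DecidableRel G.Adj]
    (hG : G.Connected)
    (E : Finset (Fin N × Fin N))
    (hEadj : ∀ i j : Fin N, G.Adj i j ↔ ((i, j) ∈ E ∨ (j, i) ∈ E))
    (hEonce : ∀ i j : Fin N, (i, j) ∈ E → (j, i) ∉ E)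
    (hEne : ∀ i j : Fin N, (i, j) ∈ E → i ≠ j)
    (rs : PiLp 2 (fun _ : Fin N => EuclideanSpace ℝ (Fin 2)))
    (d : Fin N × Fin N → EuclideanSpace ℝ (Fin 2))
    (hd : ∀ e ∈ E, d e = rs e.1 - rs e.2)
    (b : EuclideanSpace ℝ (Fin 2)) (c : ℝ) (hc : 0 < c)
    (Φ : ℝ → PiLp 2 (fun _ : Fin N => EuclideanSpace ℝ (Fin 2)) → ℝ)
    (hΦ : ∀ (a : ℝ) (r), Φ a r =
      (a / 2) * ∑ e ∈ E, ‖r e.1 - r e.2 - d e‖^2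
      + (c / 2) * ∑ i : Fin N, ‖r i - b‖^2)
    (rbar : ℝ → PiLp 2 (fun _ : Fin N => EuclideanSpace ℝ (Fin 2)))
    (hmin : ∀ a : ℝ, 0 < a → ∀ r, Φ a (rbar a) ≤ Φ a r) :
    ∀ e ∈ E, Tendsto (fun a : ℝ => rbar a e.1 - rbar a e.2) atTop
      (nhds (d e)) := by

  intro e he
  set C : ℝ := (c / 2) * ∑ i : Fin N, ‖rs i - b‖^2 with hCdef
  have hC0 : 0 ≤ C :=
    mul_nonneg (by linarith) (Finset.sum_nonneg fun i _ => sq_nonneg _)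
  have key : ∀ a : ℝ, 0 < a → ‖rbar a e.1 - rbar a e.2 - d e‖^2 ≤ 2 * C / a := by
    intro a ha
    have h1 : Φ a (rbar a) ≤ Φ a rs := hmin a ha rs
    have h2 : Φ a rs = C := by
      rw [hΦ]
      have hz : ∑ x ∈ E, ‖rs x.1 - rs x.2 - d x‖^2 = 0 := by
        apply Finset.sum_eq_zero
        intro x hx
        rw [hd x hx]; simp
      rw [hz, hCdef]; ring
    rw [hΦ, h2] at h1
    have h3 : ‖rbar a e.1 - rbar a e.2 - d e‖^2
        ≤ ∑ x ∈ E, ‖rbar a x.1 - rbar a x.2 - d x‖^2 :=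
      Finset.single_le_sum (f := fun x => ‖rbar a x.1 - rbar a x.2 - d x‖^2) (fun x _ => sq_nonneg _) he
    have h4 : 0 ≤ (c / 2) * ∑ i : Fin N, ‖rbar a i - b‖^2 :=
      mul_nonneg (by linarith) (Finset.sum_nonneg fun i _ => sq_nonneg _)
    rw [le_div_iff₀ ha]
    nlinarith [h1, h3, h4]
  have h2C : Tendsto (fun a : ℝ => 2 * C / a) atTop (nhds 0) :=
    tendsto_const_nhds.div_atTop tendsto_id
  have hsq : Tendsto (fun a : ℝ => ‖rbar a e.1 - rbar a e.2 - d e‖^2) atTop (nhds 0) := by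
    apply squeeze_zero' (Eventually.of_forall fun a => sq_nonneg _) ?_ h2C
    filter_upwards [eventually_gt_atTop (0:ℝ)] with a ha using key a ha
  have hlim : Tendsto (fun a : ℝ => ‖rbar a e.1 - rbar a e.2 - d e‖) atTop (nhds 0) := by
    have := (Real.continuous_sqrt.tendsto 0).comp hsq
    have heq : (fun a : ℝ => ‖rbar a e.1 - rbar a e.2 - d e‖)
        = (fun x => Real.sqrt x) ∘ (fun a : ℝ => ‖rbar a e.1 - rbar a e.2 - d e‖^2) := by
      funext a; simp [Real.sqrt_sq (norm_nonneg _)]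
    rw [heq]
    simpa using this
  rw [tendsto_iff_norm_sub_tendsto_zero]
  exact hlim
end

section
/- Let G be a connected finite simple graph on N ≥ 1 vertices, let E ⊆ Fin N × Fin N be an orientation of its edges (each edge appears exactly once as an ordered pair), let b ∈ ℝ², let r* ∈ (ℝ²)^N with r* not equal to the configuration having r*_i = b for all i, define d : E → ℝ² by d(i,j) = r*_i − r*_j, and let a, c > 0. Let r̄ be the unique global minimizer of Φ(r) = (a/2)·Σ_{(i,j)∈E} ‖r_i − r_j − d(i,j)‖² + (c/2)·Σ_{i=1}^N ‖r_i − b‖². Then Σ_{i=1}^N ‖r̄_i − b‖² < Σ_{i=1}^N ‖r*_i − b‖², i.e., ‖r̄ − 1_N ⊗ b‖ < ‖r* − 1_N ⊗ b‖ in the Euclidean norm on (ℝ²)^N. -/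
/-!
Contracting the desired formation toward `b` by the homothety of ratio `t` scales every edge
error by `1 - t` and every distance to the target by `t`, so along this family
`Φ = (1 - t)² (a/2) D + t² (c/2) S` with `D = ∑_E ‖r*_i - r*_j‖²` and `S = ∑ ‖r*_i - b‖² > 0`.
This equals `(c/2) S` at `t = 1` and has derivative `c S > 0` there, so some contracted formation
has smaller cost than `r*`, and `(c/2) ∑ ‖r̄_i - b‖² ≤ Φ(r̄)` is below `(c/2) S`.
-/

open Finset

theorem exists_mul_one_sub_sq_add_mul_sq_lt {A B : ℝ} (hA : 0 ≤ A) (hB : 0 < B) :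
    ∃ t : ℝ, A * (1 - t) ^ 2 + B * t ^ 2 < B := by
  refine ⟨A / (A + B), ?_⟩
  have hAB : 0 < A + B := by linarith
  have hvalue : A * (1 - A / (A + B)) ^ 2 + B * (A / (A + B)) ^ 2 = A * B / (A + B) := by
    field_simp
    ring
  rw [hvalue, div_lt_iff₀ hAB]
  nlinarith

section Homothety

variable {ι V : Type*} [NormedAddCommGroup V] [NormedSpace ℝ V]

theorem norm_homothety_sub_center (b x : V) (t : ℝ) :
    ‖AffineMap.homothety b t x - b‖ = |t| * ‖x - b‖ := by
  rw [AffineMap.homothety_apply, vsub_eq_sub, vadd_eq_add, add_sub_cancel_right, norm_smul,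
    Real.norm_eq_abs]

theorem norm_homothety_sub_homothety_sub (b x y : V) (t : ℝ) :
    ‖AffineMap.homothety b t x - AffineMap.homothety b t y - (x - y)‖ = |1 - t| * ‖x - y‖ := by
  have hsub : AffineMap.homothety b t x - AffineMap.homothety b t y - (x - y) =
      (t - 1) • (x - y) := by
    simp only [AffineMap.homothety_apply, vsub_eq_sub, vadd_eq_add]
    module
  rw [hsub, norm_smul, Real.norm_eq_abs, abs_sub_comm]

theorem sum_norm_homothety_sub_center_sq (s : Finset ι) (b : V) (t : ℝ) (x : ι → V) :
    ∑ i ∈ s, ‖AffineMap.homothety b t (x i) - b‖ ^ 2 = t ^ 2 * ∑ i ∈ s, ‖x i - b‖ ^ 2 := by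
  rw [mul_sum]
  refine sum_congr rfl fun i _ => ?_
  rw [norm_homothety_sub_center, mul_pow, sq_abs]

theorem sum_norm_homothety_sub_homothety_sub_sq (E : Finset (ι × ι)) (b : V) (t : ℝ)
    (x : ι → V) :
    ∑ e ∈ E, ‖AffineMap.homothety b t (x e.1) - AffineMap.homothety b t (x e.2)
        - (x e.1 - x e.2)‖ ^ 2 = (1 - t) ^ 2 * ∑ e ∈ E, ‖x e.1 - x e.2‖ ^ 2 := by
  rw [mul_sum]
  refine sum_congr rfl fun e _ => ?_
  rw [norm_homothety_sub_homothety_sub, mul_pow, sq_abs]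

end Homothety

theorem formation_shrinks_toward_target_general
    (N : ℕ)
    (E : Finset (Fin N × Fin N))
    (b : EuclideanSpace ℝ (Fin 2))
    (rs : PiLp 2 (fun _ : Fin N => EuclideanSpace ℝ (Fin 2)))
    (hrs : rs ≠ WithLp.toLp 2 (fun _ => b))
    (d : Fin N × Fin N → EuclideanSpace ℝ (Fin 2))
    (hd : ∀ e ∈ E, d e = rs e.1 - rs e.2)
    (a c : ℝ) (ha : 0 < a) (hc : 0 < c)
    (Φ : PiLp 2 (fun _ : Fin N => EuclideanSpace ℝ (Fin 2)) → ℝ)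
    (hΦ : ∀ r, Φ r = (a / 2) * ∑ e ∈ E, ‖r e.1 - r e.2 - d e‖^2
      + (c / 2) * ∑ i : Fin N, ‖r i - b‖^2)
    (rbar : PiLp 2 (fun _ : Fin N => EuclideanSpace ℝ (Fin 2)))
    (hmin : ∀ r, Φ rbar ≤ Φ r) :
    ∑ i : Fin N, ‖rbar i - b‖^2 < ∑ i : Fin N, ‖rs i - b‖^2 := by
  set S := ∑ i : Fin N, ‖rs i - b‖ ^ 2
  set D := ∑ e ∈ E, ‖rs e.1 - rs e.2‖ ^ 2
  have hS : 0 < S := by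
    have hnorm : ‖rs - WithLp.toLp 2 (fun _ => b)‖ ^ 2 = S := PiLp.norm_sq_eq_of_L2 _ _
    rw [← hnorm]
    exact pow_pos (norm_pos_iff.mpr (sub_ne_zero.mpr hrs)) 2
  obtain ⟨t, ht⟩ := exists_mul_one_sub_sq_add_mul_sq_lt
    (A := a / 2 * D) (B := c / 2 * S) (by positivity) (by positivity)
  let r : PiLp 2 (fun _ : Fin N => EuclideanSpace ℝ (Fin 2)) :=
    WithLp.toLp 2 (fun i => AffineMap.homothety b t (rs i))
  have hΦr : Φ r = a / 2 * D * (1 - t) ^ 2 + c / 2 * S * t ^ 2 := by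
    rw [hΦ, sum_congr rfl fun e he => by rw [hd e he], sum_norm_homothety_sub_homothety_sub_sq,
      sum_norm_homothety_sub_center_sq]
    ring
  have hΦrbar : c / 2 * ∑ i : Fin N, ‖rbar i - b‖ ^ 2 ≤ Φ rbar := by
    rw [hΦ]
    have hedges : 0 ≤ ∑ e ∈ E, ‖rbar e.1 - rbar e.2 - d e‖ ^ 2 :=
      sum_nonneg fun _ _ => sq_nonneg _
    nlinarith
  have hlt : c / 2 * ∑ i : Fin N, ‖rbar i - b‖ ^ 2 < c / 2 * S := by
    linarith [hmin r]
  exact lt_of_mul_lt_mul_left hlt (by positivity)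

/-- The optimal swarm configuration is strictly closer to the target location
than the desired formation placed at the target: the formation shrinks toward
the target. -/
theorem formation_shrinks_toward_target
    (N : ℕ) (hN : 1 ≤ N) (G : SimpleGraph (Fin N)) [DecidableRel G.Adj]
    (hG : G.Connected)
    (E : Finset (Fin N × Fin N))
    (hEadj : ∀ i j : Fin N, G.Adj i j ↔ ((i, j) ∈ E ∨ (j, i) ∈ E))
    (hEonce : ∀ i j : Fin N, (i, j) ∈ E → (j, i) ∉ E)
    (hEne : ∀ i j : Fin N, (i, j) ∈ E → i ≠ j)
    (b : EuclideanSpace ℝ (Fin 2))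
    (rs : PiLp 2 (fun _ : Fin N => EuclideanSpace ℝ (Fin 2)))
    (hrs : rs ≠ WithLp.toLp 2 (fun _ => b))
    (d : Fin N × Fin N → EuclideanSpace ℝ (Fin 2))
    (hd : ∀ e ∈ E, d e = rs e.1 - rs e.2)
    (a c : ℝ) (ha : 0 < a) (hc : 0 < c)
    (Φ : PiLp 2 (fun _ : Fin N => EuclideanSpace ℝ (Fin 2)) → ℝ)
    (hΦ : ∀ r, Φ r = (a / 2) * ∑ e ∈ E, ‖r e.1 - r e.2 - d e‖^2
      + (c / 2) * ∑ i : Fin N, ‖r i - b‖^2)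
    (rbar : PiLp 2 (fun _ : Fin N => EuclideanSpace ℝ (Fin 2)))
    (hmin : ∀ r, Φ rbar ≤ Φ r) :
    ∑ i : Fin N, ‖rbar i - b‖^2 < ∑ i : Fin N, ‖rs i - b‖^2 :=
  formation_shrinks_toward_target_general N E b rs hrs d hd a c ha hc Φ hΦ rbar hmin
end
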